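/- Let M be a topological space with basepoint x₀, fix 0 < ε < 1/6, and let σ : [0,ε] → M be a stick. Then for every s ∈ [0,1] and every γ ∈ Ω^σM, the loop r(s,γ) lies in ℋ if and only if s = 0 or s = 1. Consequently ℋ ∩ r([0,1] × Ω^σM) = r({0,1} × Ω^σM). -/

import Mathlib

/-! If `r(s,γ)` is constant at `x₀` on `[0,1/2]`, then `γ` is constant at `x₀` on `[0,s]`, since
`r(s,·)` runs through `γ|[0,s]` there. For `s > 0` this is impossible for `γ ∈ Ω^σM`: on
`(0, min ε s]` the loop `γ` equals the stick `σ`, which is injective and so avoids `x₀ = σ 0`.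
Symmetrically, constancy on `[1/2,1]` with `s < 1` is ruled out by the reversed stick near `1`. -/

open Set

/-- The based loop space of `M` at `x₀`: continuous maps `[0,1] → M` sending both
endpoints to `x₀`, with the compact-open topology. -/
abbrev OmegaLoop (M : Type*) [TopologicalSpace M] (x₀ : M) : Type _ :=
  {γ : C(unitInterval, M) // γ 0 = x₀ ∧ γ 1 = x₀}

/-- The subspace `Ω^σ M` of loops following the stick `σ` on `[0,ε]` and its reverse on
`[1-ε,1]`. -/
abbrev StickOmegaLoop (M : Type*) [TopologicalSpace M] (x₀ : M) (ε : ℝ) (σ : ℝ → M) :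
    Type _ :=
  {γ : OmegaLoop M x₀ // ∀ t : unitInterval,
    ((t : ℝ) ≤ ε → γ.1 t = σ t) ∧ (1 - ε ≤ (t : ℝ) → γ.1 t = σ (1 - (t : ℝ)))}

/-- The set `ℋ` of half-constant loops: loops constant at `x₀` on `[0,1/2]` or on
`[1/2,1]`. -/
def HalfConstant (M : Type*) [TopologicalSpace M] (x₀ : M) : Set (OmegaLoop M x₀) :=
  {γ | (∀ t : unitInterval, (t : ℝ) ≤ 1/2 → γ.1 t = x₀) ∨
    (∀ t : unitInterval, 1/2 ≤ (t : ℝ) → γ.1 t = x₀)}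

def IsReparametrization {M : Type*} [TopologicalSpace M] {x₀ : M}
    (r : unitInterval × OmegaLoop M x₀ → OmegaLoop M x₀) : Prop :=
  ∀ (s : unitInterval) (γ : OmegaLoop M x₀) (t : unitInterval),
    ((t : ℝ) ≤ 1/2 →
      (r (s, γ)).1 t = γ.1 (projIcc 0 1 zero_le_one (2 * (s : ℝ) * (t : ℝ)))) ∧
    (1/2 ≤ (t : ℝ) →
      (r (s, γ)).1 t =
        γ.1 (projIcc 0 1 zero_le_one (2 * (1 - (s : ℝ)) * (t : ℝ) - 1 + 2 * (s : ℝ))))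

theorem stick_ne_basepoint {M : Type*} {x₀ : M} {ε : ℝ} {σ : ℝ → M}
    (hσinj : InjOn σ (Icc 0 ε)) (hσ0 : σ 0 = x₀) {u : ℝ} (hu0 : 0 < u) (huε : u ≤ ε) :
    σ u ≠ x₀ := fun h =>
  hu0.ne' (hσinj ⟨hu0.le, huε⟩ ⟨le_rfl, hu0.le.trans huε⟩ (h.trans hσ0.symm))

namespace IsReparametrization

variable {M : Type*} [TopologicalSpace M] {x₀ : M}
  {r : unitInterval × OmegaLoop M x₀ → OmegaLoop M x₀}

theorem eq_basepoint_of_le_of_firstHalf (hr : IsReparametrization r) {s : unitInterval}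
    {γ : OmegaLoop M x₀} (h : ∀ t : unitInterval, (t : ℝ) ≤ 1/2 → (r (s, γ)).1 t = x₀)
    (hs : 0 < (s : ℝ)) {u : unitInterval} (hu : u ≤ s) : γ.1 u = x₀ := by
  have hu' : (u : ℝ) ≤ s := hu
  have ht : (u : ℝ) / (2 * s) ≤ 1/2 := by
    rw [div_le_iff₀ (by positivity)]
    linarith
  let t : unitInterval := ⟨u / (2 * s), div_nonneg u.2.1 (by positivity), by linarith⟩
  have harg : 2 * (s : ℝ) * t = u := by
    simp only [t]
    field_simp
  simpa only [(hr s γ t).1 ht, harg, projIcc_val] using h t ht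

theorem eq_basepoint_of_ge_of_secondHalf (hr : IsReparametrization r) {s : unitInterval}
    {γ : OmegaLoop M x₀} (h : ∀ t : unitInterval, 1/2 ≤ (t : ℝ) → (r (s, γ)).1 t = x₀)
    (hs : (s : ℝ) < 1) {u : unitInterval} (hu : s ≤ u) : γ.1 u = x₀ := by
  have hu' : (s : ℝ) ≤ u := hu
  have hd : (0 : ℝ) < 2 * (1 - s) := by linarith
  have ht : 1/2 ≤ ((u : ℝ) + 1 - 2 * s) / (2 * (1 - s)) := by
    rw [le_div_iff₀ hd]
    linarith
  have ht1 : ((u : ℝ) + 1 - 2 * s) / (2 * (1 - s)) ≤ 1 := by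
    rw [div_le_one hd]
    linarith [u.2.2]
  let t : unitInterval := ⟨((u : ℝ) + 1 - 2 * s) / (2 * (1 - s)), by linarith, ht1⟩
  have harg : 2 * (1 - (s : ℝ)) * t - 1 + 2 * s = u := by
    simp only [t]
    field_simp [(sub_pos.2 hs).ne']
    ring
  simpa only [(hr s γ t).2 ht, harg, projIcc_val] using h t ht

theorem mem_halfConstant_of_eq_zero_or_eq_one (hr : IsReparametrization r) {s : unitInterval}
    (γ : OmegaLoop M x₀) (hs : s = 0 ∨ s = 1) : r (s, γ) ∈ HalfConstant M x₀ := by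
  rcases hs with rfl | rfl
  · refine Or.inl fun t ht => ?_
    simpa [(hr 0 γ t).1 ht] using γ.2.1
  · refine Or.inr fun t ht => ?_
    norm_num [(hr 1 γ t).2 ht]
    exact γ.2.2

variable {ε : ℝ} {σ : ℝ → M}

theorem eq_zero_of_firstHalf_of_stick (hr : IsReparametrization r) (hε0 : 0 < ε)
    (hσinj : InjOn σ (Icc 0 ε)) (hσ0 : σ 0 = x₀) {s : unitInterval}
    (γ : StickOmegaLoop M x₀ ε σ)
    (h : ∀ t : unitInterval, (t : ℝ) ≤ 1/2 → (r (s, γ.1)).1 t = x₀) :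
    s = 0 := by
  by_contra hs
  have hs0 : (0 : ℝ) < s := unitInterval.pos_iff_ne_zero.2 hs
  let u : unitInterval := ⟨min ε s, (lt_min hε0 hs0).le, (min_le_right _ _).trans s.2.2⟩
  have hu : u ≤ s := show min ε (s : ℝ) ≤ s from min_le_right _ _
  have hγu : γ.1.1 u = σ u := (γ.2 u).1 (min_le_left _ _)
  exact stick_ne_basepoint hσinj hσ0 (lt_min hε0 hs0) (min_le_left _ _)
    (hγu ▸ hr.eq_basepoint_of_le_of_firstHalf h hs0 hu)

theorem eq_one_of_secondHalf_of_stick (hr : IsReparametrization r) (hε0 : 0 < ε)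
    (hσinj : InjOn σ (Icc 0 ε)) (hσ0 : σ 0 = x₀) {s : unitInterval}
    (γ : StickOmegaLoop M x₀ ε σ)
    (h : ∀ t : unitInterval, 1/2 ≤ (t : ℝ) → (r (s, γ.1)).1 t = x₀) :
    s = 1 := by
  by_contra hs
  have hs1 : (s : ℝ) < 1 := unitInterval.lt_one_iff_ne_one.2 hs
  have hu1 : max (1 - ε) (s : ℝ) < 1 := max_lt (by linarith) hs1
  let u : unitInterval := ⟨max (1 - ε) s, s.2.1.trans (le_max_right _ _), hu1.le⟩
  have hu : s ≤ u := show (s : ℝ) ≤ max (1 - ε) s from le_max_right _ _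
  have hγu : γ.1.1 u = σ (1 - u) := (γ.2 u).2 (le_max_left _ _)
  have huε : 1 - (u : ℝ) ≤ ε := by linarith [le_max_left (1 - ε) (s : ℝ)]
  exact stick_ne_basepoint hσinj hσ0 (sub_pos.2 hu1) huε
    (hγu ▸ hr.eq_basepoint_of_ge_of_secondHalf h hs1 hu)

end IsReparametrization

theorem halfConstant_inter_reparametrization_general
    {M : Type*} [TopologicalSpace M]
    (x₀ : M) (ε : ℝ) (hε0 : 0 < ε)
    (σ : ℝ → M) (hσinj : InjOn σ (Icc 0 ε))
    (hσ0 : σ 0 = x₀)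
    (r : C(unitInterval × OmegaLoop M x₀, OmegaLoop M x₀))
    (hr : ∀ (s : unitInterval) (γ : OmegaLoop M x₀) (t : unitInterval),
      ((t : ℝ) ≤ 1/2 →
        (r (s, γ)).1 t = γ.1 (projIcc 0 1 zero_le_one (2 * (s : ℝ) * (t : ℝ)))) ∧
      (1/2 ≤ (t : ℝ) →
        (r (s, γ)).1 t =
          γ.1 (projIcc 0 1 zero_le_one (2 * (1 - (s : ℝ)) * (t : ℝ) - 1 + 2 * (s : ℝ))))) :
    (∀ (s : unitInterval) (γ : StickOmegaLoop M x₀ ε σ),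
      r (s, γ.1) ∈ HalfConstant M x₀ ↔ s = 0 ∨ s = 1) ∧
    HalfConstant M x₀ ∩
        Set.range (fun p : unitInterval × StickOmegaLoop M x₀ ε σ => r (p.1, p.2.1)) =
      (fun p : unitInterval × StickOmegaLoop M x₀ ε σ => r (p.1, p.2.1)) ''
        {p | p.1 = 0 ∨ p.1 = 1} := by
  have hr' : IsReparametrization r := hr
  have hmem : ∀ (s : unitInterval) (γ : StickOmegaLoop M x₀ ε σ),
      r (s, γ.1) ∈ HalfConstant M x₀ ↔ s = 0 ∨ s = 1 := fun s γ =>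
    ⟨Or.imp (hr'.eq_zero_of_firstHalf_of_stick hε0 hσinj hσ0 γ)
        (hr'.eq_one_of_secondHalf_of_stick hε0 hσinj hσ0 γ),
      hr'.mem_halfConstant_of_eq_zero_or_eq_one γ.1⟩
  refine ⟨hmem, ?_⟩
  rw [← image_preimage_eq_inter_range]
  congr 1
  ext ⟨s, γ⟩
  exact hmem s γ

/-- For a stick `σ` (with `0 < ε < 1/6`), a reparametrized loop `r(s,γ)`
with `γ ∈ Ω^σM` is half-constant if and only if `s = 0` or `s = 1`; consequently
`ℋ ∩ r([0,1] × Ω^σM) = r({0,1} × Ω^σM)`. -/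
theorem halfConstant_inter_reparametrization
    {M : Type*} [TopologicalSpace M]
    (x₀ : M) (ε : ℝ) (hε0 : 0 < ε) (hε : ε < 1/6)
    (σ : ℝ → M) (hσcont : ContinuousOn σ (Icc 0 ε)) (hσinj : InjOn σ (Icc 0 ε))
    (hσ0 : σ 0 = x₀)
    (r : C(unitInterval × OmegaLoop M x₀, OmegaLoop M x₀))
    (hr : ∀ (s : unitInterval) (γ : OmegaLoop M x₀) (t : unitInterval),
      ((t : ℝ) ≤ 1/2 →
        (r (s, γ)).1 t = γ.1 (projIcc 0 1 zero_le_one (2 * (s : ℝ) * (t : ℝ)))) ∧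
      (1/2 ≤ (t : ℝ) →
        (r (s, γ)).1 t =
          γ.1 (projIcc 0 1 zero_le_one (2 * (1 - (s : ℝ)) * (t : ℝ) - 1 + 2 * (s : ℝ))))) :
    (∀ (s : unitInterval) (γ : StickOmegaLoop M x₀ ε σ),
      r (s, γ.1) ∈ HalfConstant M x₀ ↔ s = 0 ∨ s = 1) ∧
    HalfConstant M x₀ ∩
        Set.range (fun p : unitInterval × StickOmegaLoop M x₀ ε σ => r (p.1, p.2.1)) =
      (fun p : unitInterval × StickOmegaLoop M x₀ ε σ => r (p.1, p.2.1)) ''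
        {p | p.1 = 0 ∨ p.1 = 1} :=
  halfConstant_inter_reparametrization_general x₀ ε hε0 σ hσinj hσ0 r hr
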